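/- arXiv:2506.11495 — 7 statements merged into one kernel-verified Lean document; each statement's English description precedes it below -/
import Mathlib

section
/- The maximum degree of a vertex in the unit-zero divisor graph G_UZ(R) equals |U(R)|, the number of units of R. In particular, the vertex 0 attains this degree. -/
open SimpleGraph

/-- The unit-zero divisor graph of a commutative ring: distinct `u`, `v` are adjacent
iff `u + v` is a unit and `u * v` is a zero divisor. -/
def GUZ (R : Type*) [CommRing R] : SimpleGraph R where
  Adj u v := u ≠ v ∧ IsUnit (u + v) ∧ ∃ y : R, y ≠ 0 ∧ u * v * y = 0
  symm := by
    constructor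
    intro u v h
    refine ⟨h.1.symm, ?_, ?_⟩
    · rw [add_comm]; exact h.2.1
    · rw [mul_comm]; exact h.2.2
  loopless := by constructor; intro u h; exact h.1 rfl

theorem Set.ncard_setOf_isUnit (M : Type*) [Monoid M] :
    {u : M | IsUnit u}.ncard = Nat.card Mˣ :=
  Set.ncard_range_of_injective Units.val_injective

namespace GUZ

variable {R : Type*} [CommRing R]

theorem neighborSet_zero [Nontrivial R] : (GUZ R).neighborSet 0 = {u : R | IsUnit u} := by
  ext v
  simp only [mem_neighborSet, GUZ, zero_add, zero_mul, Set.mem_ofPred_eq]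
  exact ⟨fun h => h.2.1, fun hv => ⟨hv.ne_zero.symm, hv, 1, one_ne_zero, trivial⟩⟩

-- Translation by `x` maps the neighbours of `x` injectively into the units.
theorem ncard_neighborSet_le [Finite R] (x : R) :
    ((GUZ R).neighborSet x).ncard ≤ {u : R | IsUnit u}.ncard := by
  rw [← Set.ncard_image_of_injective _ (add_right_injective x)]
  refine Set.ncard_le_ncard ?_ (Set.toFinite _)
  rintro _ ⟨v, hv, rfl⟩
  exact hv.2.1

end GUZ

/-- The maximum degree of a vertex in `G_UZ(R)` equals `|U(R)|`, attained at `0`. -/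
theorem stmt1 (R : Type*) [CommRing R] [Fintype R] [DecidableEq R] [Nontrivial R] :
    ((GUZ R).neighborSet 0).ncard = Fintype.card Rˣ ∧
      ∀ x : R, ((GUZ R).neighborSet x).ncard ≤ Fintype.card Rˣ := by
  have hunits : {u : R | IsUnit u}.ncard = Fintype.card Rˣ := by
    rw [Set.ncard_setOf_isUnit, Nat.card_eq_fintype_card]
  refine ⟨by rw [GUZ.neighborSet_zero, hunits], fun x => ?_⟩
  exact hunits ▸ GUZ.ncard_neighborSet_le x
end

section
/- If R is a finite local commutative ring with maximal ideal m, then G_UZ(R) is a complete bipartite graph with parts Z(R) = m and U(R): two distinct elements are adjacent if and only if exactly one of them is a unit. -/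
open SimpleGraph

theorem exists_ne_zero_mul_eq_zero_iff_not_isUnit {R : Type*} [CommRing R] [Finite R] {a : R} :
    (∃ y : R, y ≠ 0 ∧ a * y = 0) ↔ ¬ IsUnit a := by
  rw [isUnit_iff_mem_nonZeroDivisors_of_finite, mem_nonZeroDivisors_iff_right]
  simp only [mul_comm _ a, not_forall, exists_prop]
  exact exists_congr fun y ↦ and_comm

theorem GUZ.adj_iff {R : Type*} [CommRing R] [Finite R] {u v : R} :
    (GUZ R).Adj u v ↔ u ≠ v ∧ IsUnit (u + v) ∧ ¬ IsUnit (u * v) :=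
  and_congr_right' <| and_congr_right' exists_ne_zero_mul_eq_zero_iff_not_isUnit

namespace IsLocalRing

variable {R : Type*} [CommRing R] [IsLocalRing R] {u v : R}

theorem isUnit_add_of_isUnit_of_not_isUnit (hu : IsUnit u) (hv : ¬ IsUnit v) :
    IsUnit (u + v) := by
  by_contra huv
  have hv' : -v ∈ nonunits R := by simpa [mem_nonunits_iff] using hv
  exact nonunits_add huv hv' (by simpa using hu)

theorem isUnit_add_and_not_isUnit_mul_iff :
    IsUnit (u + v) ∧ ¬ IsUnit (u * v) ↔ (IsUnit u ∧ ¬ IsUnit v) ∨ (¬ IsUnit u ∧ IsUnit v) := by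
  rw [IsUnit.mul_iff]
  constructor
  · rintro ⟨hsum, hprod⟩
    have := isUnit_or_isUnit_of_isUnit_add hsum
    tauto
  · rintro (⟨hu, hv⟩ | ⟨hu, hv⟩)
    · exact ⟨isUnit_add_of_isUnit_of_not_isUnit hu hv, fun h ↦ hv h.2⟩
    · exact ⟨add_comm u v ▸ isUnit_add_of_isUnit_of_not_isUnit hv hu, fun h ↦ hu h.1⟩

end IsLocalRing

/-- If `R` is a finite local commutative ring, then `G_UZ(R)` is complete bipartite with
parts the nonunits (the maximal ideal) and the units: two distinct elements are adjacent
iff exactly one of them is a unit. -/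
theorem stmt4 (R : Type*) [CommRing R] [Fintype R] [IsLocalRing R] :
    ∀ u v : R, u ≠ v →
      ((GUZ R).Adj u v ↔ (IsUnit u ∧ ¬ IsUnit v) ∨ (¬ IsUnit u ∧ IsUnit v)) := fun _ _ huv ↦
  GUZ.adj_iff.trans <| (and_iff_right huv).trans IsLocalRing.isUnit_add_and_not_isUnit_mul_iff
end

section
/- If the unit-zero divisor graph G_UZ(R) of a finite commutative ring R is a complete bipartite graph, then R is a local ring. -/
/-!
In a complete bipartite graph every vertex outside an edge is adjacent to one of its endpoints.
In `G_UZ(R)` the vertex `0` is adjacent only to units. If `R` were not local, there would be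
nonunits `a`, `b` with `a + b` a unit; in a finite ring the nonunit `a` is a zero divisor, so
`a` and `b` are adjacent, and `0` would have to be adjacent to the nonunit `a` or `b`.
-/

open SimpleGraph

theorem SimpleGraph.adj_or_adj_of_adj_of_completeBipartition {V : Type*} {G : SimpleGraph V}
    {M N : Set V} (hcover : M ∪ N = Set.univ)
    (hadj : ∀ u v : V, u ≠ v → (G.Adj u v ↔ (u ∈ M ∧ v ∈ N) ∨ (u ∈ N ∧ v ∈ M)))
    {u v w : V} (huv : G.Adj u v) (hwu : w ≠ u) (hwv : w ≠ v) : G.Adj w u ∨ G.Adj w v := by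
  have hw : w ∈ M ∨ w ∈ N := (Set.mem_union ..).1 (hcover ▸ Set.mem_univ w)
  have huv' := (hadj u v huv.ne).1 huv
  rw [hadj w u hwu, hadj w v hwv]
  tauto

section GUZ

variable {R : Type*} [CommRing R]

theorem GUZ_not_adj_zero {b : R} (hb : ¬IsUnit b) : ¬(GUZ R).Adj 0 b :=
  fun h => hb (by simpa using h.2.1)

theorem GUZ_adj_of_not_isUnit_left [Finite R] {a b : R} (ha : ¬IsUnit a) (hab : IsUnit (a + b)) :
    (GUZ R).Adj a b := by
  have hne : a ≠ b := by
    rintro rfl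
    exact ha (isUnit_of_mul_isUnit_right (by rwa [two_mul]))
  obtain ⟨y, hay, hy⟩ : {y | a * y = 0 ∧ y ≠ 0}.Nonempty :=
    notMem_nonZeroDivisors_iff_left.1 (mt isUnit_iff_mem_nonZeroDivisors_of_finite.2 ha)
  exact ⟨hne, hab, y, hy, by rw [mul_right_comm, hay, zero_mul]⟩

end GUZ

/-- If `G_UZ(R)` is a complete bipartite graph (the vertex set splits into two nonempty
parts such that distinct vertices are adjacent iff they lie in different parts), then
`R` is a local ring. -/
theorem stmt5 (R : Type*) [CommRing R] [Fintype R]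
    (M N : Set R) (hM : M.Nonempty) (hN : N.Nonempty)
    (hdisj : Disjoint M N) (hcover : M ∪ N = Set.univ)
    (hadj : ∀ u v : R, u ≠ v →
      ((GUZ R).Adj u v ↔ (u ∈ M ∧ v ∈ N) ∨ (u ∈ N ∧ v ∈ M))) :
    IsLocalRing R := by
  obtain ⟨m, hm⟩ := hM
  obtain ⟨n, hn⟩ := hN
  have : Nontrivial R := ⟨m, n, hdisj.ne_of_mem hm hn⟩
  refine IsLocalRing.of_isUnit_or_isUnit_of_isUnit_add fun a b hab => ?_
  by_contra! ⟨ha, hb⟩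
  have ha0 : (0 : R) ≠ a := fun h => hb (by simpa [← h] using hab)
  have hb0 : (0 : R) ≠ b := fun h => ha (by simpa [← h] using hab)
  rcases adj_or_adj_of_adj_of_completeBipartition hcover hadj
      (GUZ_adj_of_not_isUnit_left ha hab) ha0 hb0 with h | h
  exacts [GUZ_not_adj_zero ha h, GUZ_not_adj_zero hb h]
end

section
/- For a finite commutative ring R with identity, the unit-zero divisor graph G_UZ(R) is a star graph if and only if R is a field. -/
/-!
In a field the only products that are zero divisors involve `0`, and every nonzero element is a
unit, so `G_UZ` is the star centred at `0`. Conversely, let `c` be the centre of a star. If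
`c = 0`, every nonzero element is adjacent to `0`, hence a unit. Otherwise `c` is a unit (it is
adjacent to `0`), so every other vertex, being adjacent to `c`, is a zero divisor; thus `c` is the
only unit, `c = 1 = -1`, and every `a ∉ {0, 1}` would give an edge `a — a + 1` avoiding the centre.
-/

open SimpleGraph

def SimpleGraph.IsStarCenter {V : Type*} (G : SimpleGraph V) (c : V) : Prop :=
  (∀ v : V, v ≠ c → G.Adj c v) ∧ ∀ u v : V, G.Adj u v → u = c ∨ v = c

namespace GUZ

variable {R : Type*} [CommRing R]

lemma adj_zero_left_iff [Nontrivial R] {v : R} : (GUZ R).Adj 0 v ↔ IsUnit v :=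
  ⟨fun h => by simpa using h.2.1,
    fun hv => ⟨hv.ne_zero.symm, by simpa using hv, 1, one_ne_zero, by simp⟩⟩

lemma exists_mul_eq_zero_of_adj_of_isUnit {c v : R} (hc : IsUnit c) (h : (GUZ R).Adj c v) :
    ∃ y ≠ 0, v * y = 0 := by
  obtain ⟨-, -, y, hy, hcvy⟩ := h
  exact ⟨y, hy, by rwa [mul_assoc, hc.mul_right_eq_zero] at hcvy⟩

lemma not_isUnit_of_adj_of_isUnit {c v : R} (hc : IsUnit c) (h : (GUZ R).Adj c v) :
    ¬IsUnit v := fun hv => by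
  obtain ⟨y, hy, hvy⟩ := exists_mul_eq_zero_of_adj_of_isUnit hc h
  exact hy (hv.mul_right_eq_zero.mp hvy)

lemma adj_add_one [Nontrivial R] (h2 : (2 : R) = 0) {a : R} (ha : ∃ y ≠ 0, a * y = 0) :
    (GUZ R).Adj a (a + 1) := by
  obtain ⟨y, hy, hay⟩ := ha
  refine ⟨by simp, ?_, y, hy, by rw [mul_right_comm, hay, zero_mul]⟩
  rw [show a + (a + 1) = 2 * a + 1 by ring, h2, zero_mul, zero_add]
  exact isUnit_one

lemma eq_zero_or_eq_zero_of_adj [NoZeroDivisors R] {u v : R} (h : (GUZ R).Adj u v) :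
    u = 0 ∨ v = 0 := by
  obtain ⟨-, -, y, hy, huvy⟩ := h
  exact mul_eq_zero.mp ((mul_eq_zero.mp huvy).resolve_right hy)

lemma isStarCenter_zero (K : Type*) [Field K] : (GUZ K).IsStarCenter 0 :=
  ⟨fun _ hv => adj_zero_left_iff.mpr (isUnit_iff_ne_zero.mpr hv),
    fun _ _ h => eq_zero_or_eq_zero_of_adj h⟩

lemma isUnit_of_isStarCenter [Nontrivial R] {c a : R} (hc : (GUZ R).IsStarCenter c)
    (ha : a ≠ 0) : IsUnit a := by
  rcases eq_or_ne c 0 with rfl | hc0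
  · exact adj_zero_left_iff.mp (hc.1 a ha)
  have hcu : IsUnit c := adj_zero_left_iff.mp ((hc.1 0 hc0.symm).symm)
  have eq_of_isUnit : ∀ v, IsUnit v → v = c := fun v hv =>
    by_contra fun hvc => not_isUnit_of_adj_of_isUnit hcu (hc.1 v hvc) hv
  obtain rfl : c = 1 := (eq_of_isUnit 1 isUnit_one).symm
  have h2 : (2 : R) = 0 := by
    linear_combination -(eq_of_isUnit (-1) isUnit_one.neg)
  by_contra hau
  have ha1 : a ≠ 1 := fun h => hau (h ▸ isUnit_one)
  rcases hc.2 a (a + 1) (adj_add_one h2 (exists_mul_eq_zero_of_adj_of_isUnit hcu (hc.1 a ha1)))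
    with h | h
  · exact ha1 h
  · exact ha (by simpa using h)

lemma isField_of_isStarCenter [Nontrivial R] {c : R} (hc : (GUZ R).IsStarCenter c) :
    IsField R :=
  ⟨exists_pair_ne R, mul_comm, fun ha => (isUnit_of_isStarCenter hc ha).exists_right_inv⟩

end GUZ

theorem stmt6_general (R : Type*) [CommRing R] [Nontrivial R] :
    (∃ c : R, (∀ v : R, v ≠ c → (GUZ R).Adj c v) ∧
      ∀ u v : R, (GUZ R).Adj u v → u = c ∨ v = c) ↔ IsField R := by
  change (∃ c, (GUZ R).IsStarCenter c) ↔ IsField R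
  refine ⟨fun ⟨_, hc⟩ => GUZ.isField_of_isStarCenter hc, fun hF => ?_⟩
  let _ := hF.toField
  exact ⟨0, GUZ.isStarCenter_zero R⟩

/-- For a finite commutative ring `R`, `G_UZ(R)` is a star graph (some center adjacent to
all other vertices, and every edge contains the center) if and only if `R` is a field. -/
theorem stmt6 (R : Type*) [CommRing R] [Fintype R] [Nontrivial R] :
    (∃ c : R, (∀ v : R, v ≠ c → (GUZ R).Adj c v) ∧
      ∀ u v : R, (GUZ R).Adj u v → u = c ∨ v = c) ↔ IsField R :=
  stmt6_general R
end

section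
/- If R has exactly n maximal ideals, then G_UZ(R) is (n+1)-partite: its vertex set can be partitioned into n+1 independent sets, namely U(R) together with n sets obtained from the maximal ideals by successive set differences. -/
open SimpleGraph

/-! A product of units is not a zero divisor, and a proper ideal contains no unit, so `U(R)` and
every subset of a maximal ideal are independent. The parts `P k` are exactly `disjointed` of the
maximal ideals, hence pairwise disjoint with union the set of nonunits. -/

theorem Set.disjointed_eq_diff_iUnion_lt {α ι : Type*} [Preorder ι] [LocallyFiniteOrderBot ι]
    (f : ι → Set α) (i : ι) : disjointed f i = f i \ ⋃ j, ⋃ _ : j < i, f j := by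
  simp only [disjointed_apply, Finset.sup_set_eq_biUnion, Finset.mem_Iio]

theorem disjoint_setOf_isUnit_of_subset_ideal {R : Type*} [CommRing R] {J : Ideal R}
    (hJ : J ≠ ⊤) {s : Set R} (hs : s ⊆ J) : Disjoint {x : R | IsUnit x} s :=
  (disjoint_compl_right (a := {x : R | IsUnit x})).mono_right (hs.trans (coe_subset_nonunits hJ))

theorem nonunits_subset_iUnion_of_isMaximal {R ι : Type*} [CommRing R] {I : ι → Ideal R}
    (hall : ∀ J : Ideal R, J.IsMaximal → ∃ k, J = I k) :
    nonunits R ⊆ ⋃ k, (I k : Set R) := by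
  intro x hx
  obtain ⟨J, hJ, hxJ⟩ := exists_max_ideal_of_mem_nonunits hx
  obtain ⟨k, rfl⟩ := hall J hJ
  exact Set.mem_iUnion_of_mem k hxJ

namespace GUZ

variable {R : Type*} [CommRing R]

theorem not_adj_of_isUnit {a b : R} (ha : IsUnit a) (hb : IsUnit b) : ¬ (GUZ R).Adj a b :=
  fun ⟨_, _, y, hy, hzero⟩ => hy ((ha.mul hb).mul_right_eq_zero.mp hzero)

theorem not_adj_of_mem_ideal {J : Ideal R} (hJ : J ≠ ⊤) {a b : R} (ha : a ∈ J)
    (hb : b ∈ J) : ¬ (GUZ R).Adj a b :=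
  fun ⟨_, hunit, _⟩ => hJ (Ideal.eq_top_of_isUnit_mem _ (J.add_mem ha hb) hunit)

end GUZ

theorem stmt12_general (R : Type*) [CommRing R] (n : ℕ)
    (I : Fin n → Ideal R) (hmax : ∀ k, (I k).IsMaximal)
    (hall : ∀ J : Ideal R, J.IsMaximal → ∃ k, J = I k) :
    -- the parts, with `P k = I k \ (I 0 ∪ ⋯ ∪ I (k-1))`
    ∀ P : Fin n → Set R,
      (∀ k, P k = (I k : Set R) \ ⋃ j : Fin n, ⋃ _ : j < k, (I j : Set R)) →
      -- each part is an independent set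
      ((∀ a b : R, IsUnit a → IsUnit b → ¬ (GUZ R).Adj a b) ∧
        (∀ k, ∀ a ∈ P k, ∀ b ∈ P k, ¬ (GUZ R).Adj a b) ∧
        -- the parts are pairwise disjoint and cover `R`
        (∀ k, Disjoint {x : R | IsUnit x} (P k)) ∧
        (∀ j k, j ≠ k → Disjoint (P j) (P k)) ∧
        {x : R | IsUnit x} ∪ ⋃ k, P k = Set.univ) := by
  intro P hP
  obtain rfl : P = disjointed fun k => (I k : Set R) :=
    funext fun k =>
      (hP k).trans (Set.disjointed_eq_diff_iUnion_lt (fun k => (I k : Set R)) k).symm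
  have hsub k : disjointed (fun k => (I k : Set R)) k ⊆ I k := disjointed_subset _ k
  refine ⟨fun a b => GUZ.not_adj_of_isUnit,
    fun k a ha b hb => GUZ.not_adj_of_mem_ideal (hmax k).ne_top (hsub k ha) (hsub k hb),
    fun k => disjoint_setOf_isUnit_of_subset_ideal (hmax k).ne_top (hsub k),
    fun _ _ hjk => disjoint_disjointed _ hjk, ?_⟩
  rw [iUnion_disjointed]
  exact Set.eq_univ_of_forall fun x =>
    (em (IsUnit x)).imp id fun hx => nonunits_subset_iUnion_of_isMaximal hall hx

/-- If `R` has exactly `n` maximal ideals `I 0, …, I (n-1)`, then `G_UZ(R)` is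
`(n+1)`-partite: the sets `U(R)`, `I 0`, and `I k \ (I 0 ∪ ⋯ ∪ I (k-1))` for
`1 ≤ k ≤ n-1` are pairwise disjoint independent sets covering `R`. -/
theorem stmt12 (R : Type*) [CommRing R] [Fintype R] (n : ℕ)
    (I : Fin n → Ideal R) (hmax : ∀ k, (I k).IsMaximal)
    (hinj : Function.Injective I)
    (hall : ∀ J : Ideal R, J.IsMaximal → ∃ k, J = I k) :
    -- the parts, with `P k = I k \ (I 0 ∪ ⋯ ∪ I (k-1))`
    ∀ P : Fin n → Set R,
      (∀ k, P k = (I k : Set R) \ ⋃ j : Fin n, ⋃ _ : j < k, (I j : Set R)) →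
      -- each part is an independent set
      ((∀ a b : R, IsUnit a → IsUnit b → ¬ (GUZ R).Adj a b) ∧
        (∀ k, ∀ a ∈ P k, ∀ b ∈ P k, ¬ (GUZ R).Adj a b) ∧
        -- the parts are pairwise disjoint and cover `R`
        (∀ k, Disjoint {x : R | IsUnit x} (P k)) ∧
        (∀ j k, j ≠ k → Disjoint (P j) (P k)) ∧
        {x : R | IsUnit x} ∪ ⋃ k, P k = Set.univ) :=
  stmt12_general R n I hmax hall
end

section
/- G_UZ(Z_n) contains a triangle (cycle of length 3) if and only if n is odd, composite, and not a prime power. -/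
open SimpleGraph

theorem SimpleGraph.exists_triangle_iff_not_cliqueFree_three {V : Type*} {G : SimpleGraph V} :
    (∃ a b c, G.Adj a b ∧ G.Adj b c ∧ G.Adj a c) ↔ ¬ G.CliqueFree 3 := by
  classical
  simp only [CliqueFree, not_forall, not_not, is3Clique_iff]
  constructor
  · rintro ⟨a, b, c, hab, hbc, hac⟩
    exact ⟨_, a, b, c, hab, hac, hbc, rfl⟩
  · rintro ⟨-, a, b, c, hab, hac, hbc, -⟩
    exact ⟨a, b, c, hab, hbc, hac⟩

theorem Nat.exists_coprime_mul_eq_of_not_isPrimePow {n : ℕ} (hn : 1 < n) (h : ¬ IsPrimePow n) :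
    ∃ a b, 1 < a ∧ 1 < b ∧ a.Coprime b ∧ a * b = n := by
  have hp := Nat.minFac_prime hn.ne'
  have hn0 : n ≠ 0 := by omega
  refine ⟨ordProj[n.minFac] n, ordCompl[n.minFac] n, ?_, ?_,
    (Nat.coprime_ordCompl hp hn0).pow_left _, Nat.ordProj_mul_ordCompl_eq_self n _⟩
  · exact Nat.one_lt_pow (hp.factorization_pos_of_dvd hn0 n.minFac_dvd).ne' hp.one_lt
  · have hne : ordCompl[n.minFac] n ≠ 1 := fun h1 =>
      h ((exists_ordCompl_eq_one_iff_isPrimePow hn.ne').2 ⟨_, hp, h1⟩)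
    have := Nat.ordCompl_pos n.minFac hn0
    omega

theorem ZMod.isUnit_two_of_odd {n : ℕ} (hn : Odd n) : IsUnit (2 : ZMod n) := by
  simpa using (ZMod.isUnit_iff_coprime 2 n).2 (Nat.coprime_two_left.2 hn)

theorem ZMod.isLocalRing_of_isPrimePow {n : ℕ} (hn : IsPrimePow n) : IsLocalRing (ZMod n) := by
  obtain ⟨p, k, hp, -, rfl⟩ := (isPrimePow_nat_iff n).1 hn
  have : Fact p.Prime := ⟨hp⟩
  have : Nontrivial (ZMod (p ^ k)) := ZMod.nontrivial_iff.2 hn.ne_one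
  exact IsLocalRing.of_surjective' (PadicInt.toZModPow k) (ZMod.ringHom_surjective _)

namespace GUZ

variable {R S : Type*} [CommRing R] [CommRing S]

def isoOfRingEquiv (e : R ≃+* S) : GUZ R ≃g GUZ S where
  toEquiv := e.toEquiv
  map_rel_iff' {u v} := by
    simp only [GUZ, RingEquiv.toEquiv_eq_coe, EquivLike.coe_coe, ne_eq,
      EmbeddingLike.apply_eq_iff_eq, ← map_add, isUnit_map_iff, ← map_mul, e.surjective.exists,
      map_eq_zero_iff _ e.injective]

theorem isBipartite_of_isLocalRing [IsLocalRing R] : (GUZ R).IsBipartite := by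
  have valid : ∀ {u v : R}, (GUZ R).Adj u v → IsUnit u ≠ IsUnit v := by
    rintro u v ⟨-, huv, y, hy, h⟩ hiff
    by_cases hu : IsUnit u
    · exact hy ((hu.mul (hiff ▸ hu)).mul_right_eq_zero.1 h)
    · exact IsLocalRing.nonunits_add hu (show ¬IsUnit v from hiff ▸ hu) huv
  simpa using (Coloring.mk (fun x : R => IsUnit x) valid).colorable

theorem isBipartite_of_ringHom_zmod_two (f : R →+* ZMod 2) : (GUZ R).IsBipartite := by
  have valid : ∀ {u v : R}, (GUZ R).Adj u v → f u ≠ f v := by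
    rintro u v ⟨-, huv, -⟩ hf
    have := huv.map f
    rw [map_add, hf, CharTwo.add_self_eq_zero] at this
    exact not_isUnit_zero this
  simpa using (Coloring.mk f valid).colorable

theorem not_cliqueFree_three_prod [Nontrivial R] [Nontrivial S] (hR : IsUnit (2 : R))
    (hS : IsUnit (2 : S)) : ¬ (GUZ (R × S)).CliqueFree 3 := by
  classical
  refine fun h => h {(0, 1), (1, 0), (1, 1)} (is3Clique_triple_iff.2 ⟨?_, ?_, ?_⟩)
  · exact ⟨by simp [Prod.ext_iff], by simp [Prod.isUnit_iff], 1, one_ne_zero, by simp⟩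
  · exact ⟨by simp [Prod.ext_iff], by simp [Prod.isUnit_iff, one_add_one_eq_two, hS], (1, 0),
      by simp [Prod.ext_iff], by simp⟩
  · exact ⟨by simp [Prod.ext_iff], by simp [Prod.isUnit_iff, one_add_one_eq_two, hR], (0, 1),
      by simp [Prod.ext_iff], by simp⟩

end GUZ

/-- `G_UZ(ℤ_n)` contains a triangle if and only if `n` is odd, composite, and not a
prime power. -/
theorem stmt18 (n : ℕ) (hn : 2 ≤ n) :
    (∃ a b c : ZMod n, (GUZ (ZMod n)).Adj a b ∧ (GUZ (ZMod n)).Adj b c ∧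
        (GUZ (ZMod n)).Adj a c) ↔
      (Odd n ∧ ¬ n.Prime ∧ ¬ IsPrimePow n) := by
  rw [exists_triangle_iff_not_cliqueFree_three]
  constructor
  · intro h
    have hpp : ¬ IsPrimePow n := by
      intro hpp
      have := ZMod.isLocalRing_of_isPrimePow hpp
      exact h (GUZ.isBipartite_of_isLocalRing.cliqueFree (by norm_num))
    refine ⟨?_, fun hp => hpp hp.isPrimePow, hpp⟩
    by_contra hodd
    have h2 : 2 ∣ n := (Nat.not_odd_iff_even.1 hodd).two_dvd
    exact h ((GUZ.isBipartite_of_ringHom_zmod_two (ZMod.castHom h2 (ZMod 2))).cliqueFree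
      (by norm_num))
  · rintro ⟨hodd, -, hpp⟩
    obtain ⟨a, b, ha, hb, hab, rfl⟩ := Nat.exists_coprime_mul_eq_of_not_isPrimePow hn hpp
    have : Nontrivial (ZMod a) := ZMod.nontrivial_iff.2 ha.ne'
    have : Nontrivial (ZMod b) := ZMod.nontrivial_iff.2 hb.ne'
    intro h
    exact GUZ.not_cliqueFree_three_prod
      (ZMod.isUnit_two_of_odd (hodd.of_dvd_nat (dvd_mul_right a b)))
      (ZMod.isUnit_two_of_odd (hodd.of_dvd_nat (dvd_mul_left b a)))
      (h.comap (GUZ.isoOfRingEquiv (ZMod.chineseRemainder hab)).isContained')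
end

section
/- G_UZ(Z_n) is a cycle graph if and only if n = 4 or n = 6; specifically G_UZ(Z_4) ≅ C_4 and G_UZ(Z_6) ≅ C_6. -/
open SimpleGraph

/-! In a cycle every vertex has exactly two neighbours. If `ℤ/n` is a domain (`n = 0` or `n`
prime), `1 * v` is a zero divisor only for `v = 0`, so `1` has at most one neighbour. Otherwise `0`
is adjacent to every unit, so `φ n ≤ 2`, which for composite `n` leaves only `n = 4` and `n = 6`;
for these two the graph is a cycle by direct computation. -/

open scoped Nat

namespace SimpleGraph

lemma Iso.ncard_neighborSet {V W : Type*} {G : SimpleGraph V} {G' : SimpleGraph W}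
    (f : G ≃g G') (v : V) : (G'.neighborSet (f v)).ncard = (G.neighborSet v).ncard := by
  rw [← Nat.card_coe_set_eq, ← Nat.card_coe_set_eq]
  exact (Nat.card_congr (f.mapNeighborSet v)).symm

lemma ncard_neighborSet_cycleGraph {m : ℕ} (hm : 3 ≤ m) (v : Fin m) :
    ((cycleGraph m).neighborSet v).ncard = 2 := by
  obtain ⟨k, rfl⟩ : ∃ k, m = k + 3 := ⟨m - 3, by omega⟩
  rw [← Nat.card_coe_set_eq, Nat.card_eq_fintype_card, card_neighborSet_eq_degree,
    cycleGraph_degree_three_le]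

end SimpleGraph

lemma Nat.exists_coprime_between {n : ℕ} (h5 : 5 ≤ n) (h6 : n ≠ 6) :
    ∃ k, 1 < k ∧ k < n - 1 ∧ n.Coprime k := by
  obtain ⟨m, rfl | rfl⟩ := n.even_or_odd'
  · -- for `n = 2m` take `k = m - 1` if `m` is even and `k = m - 2` if `m` is odd
    obtain ⟨j, rfl | rfl⟩ := m.even_or_odd'
    all_goals
      refine ⟨2 * j - 1, by omega, by omega, Nat.Coprime.mul_left ?_ ?_⟩
      · exact Nat.coprime_two_left.2 ⟨j - 1, by omega⟩
    · exact (Nat.coprime_self_sub_right (by omega)).2 (Nat.coprime_one_right _)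
    · rw [show 2 * j - 1 = 2 * j + 1 - 2 by omega, Nat.coprime_self_sub_right (by omega)]
      exact Nat.coprime_two_right.2 (odd_two_mul_add_one j)
  · exact ⟨2, by omega, by omega, Nat.coprime_two_right.2 (odd_two_mul_add_one m)⟩

lemma Nat.two_lt_totient {n : ℕ} (h5 : 5 ≤ n) (h6 : n ≠ 6) : 2 < φ n := by
  obtain ⟨k, hk1, hkn, hk⟩ := Nat.exists_coprime_between h5 h6
  rw [Nat.totient_eq_card_coprime, Finset.two_lt_card]
  refine ⟨1, ?_, k, ?_, n - 1, ?_, by omega, by omega, by omega⟩ <;>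
    simp only [Finset.mem_filter, Finset.mem_range]
  · exact ⟨by omega, Nat.coprime_one_right n⟩
  · exact ⟨by omega, hk⟩
  · exact ⟨by omega, (Nat.coprime_self_sub_right (by omega)).2 (Nat.coprime_one_right n)⟩

namespace GUZ

variable {R : Type*} [CommRing R]

instance [Fintype R] [DecidableEq R] : DecidableRel (GUZ R).Adj :=
  fun u v => inferInstanceAs (Decidable (u ≠ v ∧ IsUnit (u + v) ∧ ∃ y : R, y ≠ 0 ∧ u * v * y = 0))

lemma zero_adj_of_isUnit [Nontrivial R] {u : R} (hu : IsUnit u) : (GUZ R).Adj 0 u :=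
  ⟨hu.ne_zero.symm, by rwa [zero_add], 1, one_ne_zero, by rw [zero_mul, zero_mul]⟩

lemma eq_zero_of_one_adj [IsDomain R] {v : R} (h : (GUZ R).Adj 1 v) : v = 0 := by
  obtain ⟨-, -, y, hy, hvy⟩ := h
  rw [one_mul, mul_eq_zero] at hvy
  exact hvy.resolve_right hy

lemma ncard_neighborSet_one_le_one [IsDomain R] : ((GUZ R).neighborSet 1).ncard ≤ 1 :=
  calc ((GUZ R).neighborSet 1).ncard ≤ ({0} : Set R).ncard :=
        Set.ncard_le_ncard (fun _ => eq_zero_of_one_adj) (Set.finite_singleton 0)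
    _ = 1 := Set.ncard_singleton 0

lemma totient_le_ncard_neighborSet_zero (n : ℕ) [Fact (1 < n)] :
    φ n ≤ ((GUZ (ZMod n)).neighborSet 0).ncard :=
  calc φ n = (Set.range ((↑) : (ZMod n)ˣ → ZMod n)).ncard := by
        rw [Set.ncard_range_of_injective Units.val_injective, Nat.card_eq_fintype_card,
          ZMod.card_units_eq_totient]
    _ ≤ _ := Set.ncard_le_ncard (Set.range_subset_iff.2 fun u => zero_adj_of_isUnit u.isUnit)

lemma eq_four_or_six_of_ncard_neighborSet_eq_two {n : ℕ}
    (h : ∀ v : ZMod n, ((GUZ (ZMod n)).neighborSet v).ncard = 2) : n = 4 ∨ n = 6 := by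
  obtain rfl | rfl | hn : n = 0 ∨ n = 1 ∨ 2 ≤ n := by omega
  · have := ncard_neighborSet_one_le_one (R := ZMod 0)
    have := h 1
    omega
  · have := Set.ncard_le_one_of_subsingleton ((GUZ (ZMod 1)).neighborSet 0)
    have := h 0
    omega
  by_cases hp : n.Prime
  · have := Fact.mk hp
    have := ncard_neighborSet_one_le_one (R := ZMod n)
    have := h 1
    omega
  have h4 : 4 ≤ n := by
    by_contra!
    interval_cases n <;> norm_num at hp
  have : Fact (1 < n) := ⟨by omega⟩
  by_contra h46
  have := Nat.two_lt_totient (n := n) (by omega) (by omega)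
  have := totient_le_ncard_neighborSet_zero n
  have := h 0
  omega

def isoCycleGraphFour : GUZ (ZMod 4) ≃g cycleGraph 4 where
  toEquiv := Equiv.refl _
  map_rel_iff' := by decide

-- the cycle is `0 – 1 – 4 – 3 – 2 – 5 – 0`
def isoCycleGraphSix : GUZ (ZMod 6) ≃g cycleGraph 6 where
  toEquiv := Equiv.swap 2 4
  map_rel_iff' := by decide

end GUZ

/-- `G_UZ(ℤ_n)` is a cycle graph iff `n = 4` or `n = 6`; specifically
`G_UZ(ℤ_4) ≅ C₄` and `G_UZ(ℤ_6) ≅ C₆`. -/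
theorem stmt19 :
    (∀ n : ℕ, (∃ m : ℕ, 3 ≤ m ∧ Nonempty ((GUZ (ZMod n)) ≃g cycleGraph m)) ↔
      (n = 4 ∨ n = 6)) ∧
    Nonempty ((GUZ (ZMod 4)) ≃g cycleGraph 4) ∧
    Nonempty ((GUZ (ZMod 6)) ≃g cycleGraph 6) := by
  refine ⟨fun n => ⟨?_, ?_⟩, ⟨GUZ.isoCycleGraphFour⟩, ⟨GUZ.isoCycleGraphSix⟩⟩
  · rintro ⟨m, hm, ⟨f⟩⟩
    refine GUZ.eq_four_or_six_of_ncard_neighborSet_eq_two fun v => ?_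
    rw [← f.ncard_neighborSet, ncard_neighborSet_cycleGraph hm]
  · rintro (rfl | rfl)
    · exact ⟨4, by norm_num, ⟨GUZ.isoCycleGraphFour⟩⟩
    · exact ⟨6, by norm_num, ⟨GUZ.isoCycleGraphSix⟩⟩
end
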